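/- Let n ≥ 1 and let g = diag(1,−1,…,−1) be the (n+1)×(n+1) Minkowski metric matrix. Consider the Poincaré Lie algebra iso(1,n) realized as the Lie algebra of (n+2)×(n+2) real matrices of block form [[A, b],[0, 0]] with A ∈ so(1,n) = { X ∈ M_{n+1}(ℝ) : Xᵀg + gX = 0 } and b ∈ ℝ^{n+1}, with bracket the matrix commutator. For every ν with 1 ≤ ν ≤ n, the embedded boost generator [[m_{0ν}, 0],[0,0]] with m_{0ν} = E(0,ν) + E(ν,0) is an essential element of iso(1,n). -/

import Mathlib

open Matrix

attribute [local instance 100] LieRing.ofAssociativeRing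

/-- The linear span of all brackets `⁅a, b⁆` with `a ∈ A`, `b ∈ B`. -/
def bracketSpan {L : Type*} [LieRing L] [LieAlgebra ℝ L] (A B : Submodule ℝ L) :
    Submodule ℝ L :=
  Submodule.span ℝ {x | ∃ a ∈ A, ∃ b ∈ B, x = ⁅a, b⁆}

/-- `m` is essential: `ad m` is diagonalizable over `ℝ` and
`ℝ·m + [m,g] + [[m,g],[m,g]] = g`. -/
def Essential {L : Type*} [LieRing L] [LieAlgebra ℝ L] (m : L) : Prop :=
  (⨆ c : ℝ, (LieAlgebra.ad ℝ L m).eigenspace c) = ⊤ ∧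
    Submodule.span ℝ {m} ⊔ LinearMap.range (LieAlgebra.ad ℝ L m) ⊔
      bracketSpan (LinearMap.range (LieAlgebra.ad ℝ L m))
        (LinearMap.range (LieAlgebra.ad ℝ L m)) = ⊤

/-- The real Lie algebra of matrices `X` with `Xᵀ * J + J * X = 0`. -/
def lieSO {ι : Type*} [Fintype ι] [DecidableEq ι] (J : Matrix ι ι ℝ) :
    LieSubalgebra ℝ (Matrix ι ι ℝ) where
  carrier := {X | Xᵀ * J + J * X = 0}
  zero_mem' := by simp
  add_mem' := by
    intro a b ha hb
    simp only [Set.mem_setOf_eq] at ha hb ⊢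
    rw [transpose_add, add_mul, mul_add, add_add_add_comm, ha, hb, add_zero]
  smul_mem' := by
    intro r X hX
    simp only [Set.mem_setOf_eq] at hX ⊢
    rw [transpose_smul, smul_mul, Matrix.mul_smul, ← smul_add, hX, smul_zero]
  lie_mem' := by
    intro X Y hX hY
    simp only [Set.mem_setOf_eq] at hX hY ⊢
    have hX' : Xᵀ * J = -(J * X) := eq_neg_of_add_eq_zero_left hX
    have hY' : Yᵀ * J = -(J * Y) := eq_neg_of_add_eq_zero_left hY
    have h1 : Yᵀ * Xᵀ * J = J * (Y * X) := by
      rw [mul_assoc, hX', mul_neg, ← mul_assoc, hY', neg_mul, neg_neg, mul_assoc]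
    have h2 : Xᵀ * Yᵀ * J = J * (X * Y) := by
      rw [mul_assoc, hY', mul_neg, ← mul_assoc, hX', neg_mul, neg_neg, mul_assoc]
    rw [Ring.lie_def, transpose_sub, transpose_mul, transpose_mul, sub_mul, h1, h2,
      mul_sub]
    abel

/-- The symmetric "boost" matrix `E(a,b) + E(b,a)` lies in `lieSO (diagonal d)`
whenever `d a = 1` and `d b = -1`. -/
lemma boost_mem_lieSO {ι : Type*} [Fintype ι] [DecidableEq ι] (d : ι → ℝ) (a b : ι)
    (ha : d a = 1) (hb : d b = -1) :
    (single a b (1 : ℝ) + single b a 1) ∈ lieSO (diagonal d) := by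
  have hab : a ≠ b := by intro h; rw [h, hb] at ha; norm_num at ha
  show _ᵀ * _ + _ * _ = 0
  ext i j
  simp only [transpose_add, add_mul, mul_add, Matrix.add_apply, mul_diagonal,
    diagonal_mul, transpose_apply, Matrix.zero_apply, single, of_apply]
  split_ifs <;> simp_all

/-- The Minkowski metric diagonal `(1,-1,…,-1)` on indices `0,…,n`. -/
def minkDiag (n : ℕ) : Fin (n + 1) → ℝ := fun i => if i = 0 then 1 else -1

/-- The Poincaré Lie algebra `iso(1,n)`, realized as the `(n+2)×(n+2)` real matrices of
block form `[[A, b], [0, 0]]` with `A ∈ so(1,n)` and `b ∈ ℝ^{n+1}`. -/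
def poincareLie (n : ℕ) :
    LieSubalgebra ℝ (Matrix (Fin (n + 1) ⊕ Unit) (Fin (n + 1) ⊕ Unit) ℝ) where
  carrier := {X | ∃ A ∈ lieSO (Matrix.diagonal (minkDiag n)),
    ∃ b : Matrix (Fin (n + 1)) Unit ℝ, X = fromBlocks A b 0 0}
  zero_mem' := ⟨0, (lieSO _).zero_mem, 0, by rw [fromBlocks_zero]⟩
  add_mem' := by
    rintro x y ⟨A₁, hA₁, b₁, rfl⟩ ⟨A₂, hA₂, b₂, rfl⟩
    exact ⟨A₁ + A₂, (lieSO _).add_mem hA₁ hA₂, b₁ + b₂, by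
      rw [fromBlocks_add]; simp⟩
  smul_mem' := by
    rintro r x ⟨A, hA, b, rfl⟩
    exact ⟨r • A, (lieSO _).smul_mem r hA, r • b, by rw [fromBlocks_smul]; simp⟩
  lie_mem' := by
    rintro x y ⟨A₁, hA₁, b₁, rfl⟩ ⟨A₂, hA₂, b₂, rfl⟩
    refine ⟨⁅A₁, A₂⁆, (lieSO _).lie_mem hA₁ hA₂, A₁ * b₂ - A₂ * b₁, ?_⟩
    rw [Ring.lie_def, Ring.lie_def, fromBlocks_multiply, fromBlocks_multiply,
      sub_eq_add_neg, fromBlocks_neg, fromBlocks_add]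
    simp [sub_eq_add_neg]

/-! The boost `m = B_i` (Minkowski index `ν = i + 1`) satisfies `(ad m)^3 = ad m`: on the
translation part because the matrix `E(0,ν) + E(ν,0)` cubes to itself, and on `so(1,n)` because
its entries at `(0,0)`, `(ν,ν)` vanish and those at `(0,ν)`, `(ν,0)` agree. Hence `ad m` is
diagonalizable with eigenvalues `0, ±1`.

For the spanning condition it suffices to reach the boosts `B_j`, rotations `R_jk` and
translations `T_μ`. Besides `m` itself, the brackets `[m, B_j] = R_ij`, `[m, R_ij] = B_j`
(`j ≠ i`), `[m, T_0] = T_i` and `[m, T_i] = T_0` lie in `[m,g]`, and the remaining generators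
`R_jk = [B_j, B_k]` and `T_j = [B_j, T_0]` (`j, k ≠ i`) are brackets of two such elements. -/

section CubeEqSelf

variable {K V : Type*} [Field K] [NeZero (2 : K)] [AddCommGroup V] [Module K V]

theorem Module.End.iSup_eigenspace_eq_top_of_pow_three_eq_self {f : Module.End K V}
    (hf : f ^ 3 = f) : ⨆ c : K, f.eigenspace c = ⊤ := by
  have hf' (x : V) : f (f (f x)) = f x := congr($hf x)
  refine eq_top_iff.2 fun x _ => ?_
  have h0 : x - f (f x) ∈ f.eigenspace 0 := by
    simp [hf']
  have h1 : (2⁻¹ : K) • (f (f x) + f x) ∈ f.eigenspace 1 := by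
    simp [hf', add_comm]
  have h2 : (2⁻¹ : K) • (f (f x) - f x) ∈ f.eigenspace (-1) := by
    rw [Module.End.mem_eigenspace_iff, map_smul, map_sub, hf']
    module
  have hx : x = (x - f (f x)) + (2⁻¹ : K) • (f (f x) + f x) + (2⁻¹ : K) • (f (f x) - f x) := by
    match_scalars <;> field_simp <;> ring
  rw [hx]
  exact add_mem (add_mem (Submodule.mem_iSup_of_mem 0 h0) (Submodule.mem_iSup_of_mem 1 h1))
    (Submodule.mem_iSup_of_mem (-1) h2)

end CubeEqSelf

section EssentialSpan

variable {L : Type*} [LieRing L] [LieAlgebra ℝ L]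

def essentialSpan (m : L) : Submodule ℝ L :=
  Submodule.span ℝ {m} ⊔ LinearMap.range (LieAlgebra.ad ℝ L m) ⊔
    bracketSpan (LinearMap.range (LieAlgebra.ad ℝ L m)) (LinearMap.range (LieAlgebra.ad ℝ L m))

theorem self_mem_essentialSpan (m : L) : m ∈ essentialSpan m :=
  Submodule.mem_sup_left (Submodule.mem_sup_left (Submodule.mem_span_singleton_self m))

theorem lie_mem_essentialSpan (m x : L) : ⁅m, x⁆ ∈ essentialSpan m :=
  Submodule.mem_sup_left (Submodule.mem_sup_right ⟨x, rfl⟩)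

theorem lie_lie_mem_essentialSpan (m x y : L) : ⁅⁅m, x⁆, ⁅m, y⁆⁆ ∈ essentialSpan m :=
  Submodule.mem_sup_right (Submodule.subset_span ⟨_, ⟨x, rfl⟩, _, ⟨y, rfl⟩, rfl⟩)

end EssentialSpan

namespace Matrix

variable {ι κ R : Type*} [Fintype ι] [DecidableEq ι] [CommRing R] {a b c : ι}

theorem lie_fromBlocks_zero_zero [Fintype κ] [DecidableEq κ] (A A' : Matrix ι ι R)
    (B B' : Matrix ι κ R) :
    ⁅fromBlocks A B (0 : Matrix κ ι R) (0 : Matrix κ κ R),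
        fromBlocks A' B' (0 : Matrix κ ι R) (0 : Matrix κ κ R)⁆ =
      fromBlocks ⁅A, A'⁆ (A * B' - A' * B) 0 0 := by
  simp [Ring.lie_def, fromBlocks_multiply, sub_eq_add_neg, fromBlocks_neg, fromBlocks_add]

theorem single_add_single_mul_apply (Y : Matrix ι κ R) (i : ι) (k : κ) :
    ((single a b (1 : R) + single b a 1) * Y : Matrix ι κ R) i k =
      (if i = a then Y b k else 0) + (if i = b then Y a k else 0) := by
  rw [Matrix.add_mul, Matrix.add_apply]
  congr 1 <;> simp [mul_apply, single_apply, ite_and, eq_comm]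

theorem mul_single_add_single_apply (Y : Matrix κ ι R) (k : κ) (j : ι) :
    (Y * (single a b (1 : R) + single b a 1) : Matrix κ ι R) k j =
      (if j = b then Y k a else 0) + (if j = a then Y k b else 0) := by
  rw [Matrix.mul_add, Matrix.add_apply]
  congr 1 <;> simp [mul_apply, single_apply, ite_and, eq_comm]

theorem single_add_single_pow_three (hab : a ≠ b) :
    (single a b (1 : R) + single b a 1) ^ 3 = single a b 1 + single b a 1 := by
  simp [pow_succ, add_mul, mul_add, hab, hab.symm]

theorem lie_lie_lie_single_add_single {X : Matrix ι ι R} (hab : a ≠ b) (haa : X a a = 0)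
    (hbb : X b b = 0) (hba : X b a = X a b) :
    ⁅single a b (1 : R) + single b a 1, ⁅single a b (1 : R) + single b a 1,
      ⁅single a b (1 : R) + single b a 1, X⁆⁆⁆ = ⁅single a b (1 : R) + single b a 1, X⁆ := by
  ext i j
  simp only [Ring.lie_def, Matrix.sub_apply, single_add_single_mul_apply,
    mul_single_add_single_apply]
  split_ifs <;> subst_vars <;> simp_all

theorem lie_single_add_single_single_add_single (hab : a ≠ b) (hac : a ≠ c) :
    ⁅single a b (1 : R) + single b a 1, single a c (1 : R) + single c a 1⁆ =
      single b c 1 - single c b 1 := by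
  rcases eq_or_ne b c with rfl | hbc
  · simp
  · simp [Ring.lie_def, add_mul, mul_add, hab, hac, hab.symm, hac.symm, hbc, hbc.symm]

theorem lie_single_add_single_single_sub_single (hab : a ≠ b) (hac : a ≠ c) (hbc : b ≠ c) :
    ⁅single a b (1 : R) + single b a 1, single b c (1 : R) - single c b 1⁆ =
      single a c 1 + single c a 1 := by
  simp [Ring.lie_def, add_mul, mul_add, sub_mul, mul_sub, hab, hac, hab.symm, hac.symm, hbc,
    hbc.symm]

theorem single_add_single_mul_single_left [DecidableEq κ] (hab : a ≠ b) (k : κ) :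
    (single a b (1 : R) + single b a 1) * single a k (1 : R) = single b k 1 := by
  simp [Matrix.add_mul, hab.symm]

theorem single_add_single_mul_single_right [DecidableEq κ] (hab : a ≠ b) (k : κ) :
    (single a b (1 : R) + single b a 1) * single b k (1 : R) = single a k 1 := by
  simp [Matrix.add_mul, hab]

end Matrix

section LieSO

variable {ι : Type*} [Fintype ι] [DecidableEq ι] {d : ι → ℝ}

theorem single_sub_single_mem_lieSO {a b : ι} (h : d a = d b) :
    (single a b (1 : ℝ) - single b a 1) ∈ lieSO (diagonal d) := by
  change _ᵀ * _ + _ * _ = 0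
  ext i j
  simp only [transpose_sub, Matrix.sub_mul, Matrix.mul_sub, Matrix.add_apply, Matrix.sub_apply,
    mul_diagonal, diagonal_mul, transpose_apply, Matrix.zero_apply, single_apply]
  grind

variable {X : Matrix ι ι ℝ} (hX : X ∈ lieSO (diagonal d))
include hX

theorem lieSO_diagonal_apply (i j : ι) : X j i * d j + d i * X i j = 0 := by
  simpa [mul_diagonal, diagonal_mul] using congr_fun₂ hX i j

theorem lieSO_diagonal_apply_self {i : ι} (hi : d i ≠ 0) : X i i = 0 := by
  have h : d i * (2 * X i i) = 0 := by linear_combination lieSO_diagonal_apply hX i i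
  simpa [hi] using h

theorem lieSO_diagonal_apply_swap_of_eq_neg {i j : ι} (hi : d i ≠ 0) (hij : d j = -d i) :
    X j i = X i j := by
  have h : d i * (X i j - X j i) = 0 := by
    linear_combination lieSO_diagonal_apply hX i j - X j i * hij
  simpa [hi, sub_eq_zero, eq_comm] using h

theorem lieSO_diagonal_apply_swap_of_eq {i j : ι} (hi : d i ≠ 0) (hij : d j = d i) :
    X j i = -X i j := by
  have h : d i * (X j i + X i j) = 0 := by
    linear_combination lieSO_diagonal_apply hX i j - X j i * hij
  simpa [hi, add_eq_zero_iff_eq_neg] using h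

end LieSO

namespace PoincareLie

variable {n : ℕ}

-- A spatial index `j : Fin n` stands for the Minkowski index `j.succ : Fin (n + 1)`.
def boost (i : Fin n) : poincareLie n :=
  ⟨fromBlocks (single 0 i.succ 1 + single i.succ 0 1) 0 0 0,
    _, boost_mem_lieSO (minkDiag n) 0 i.succ (by simp [minkDiag]) (by simp [minkDiag]), 0, rfl⟩

def rotation (i j : Fin n) : poincareLie n :=
  ⟨fromBlocks (single i.succ j.succ 1 - single j.succ i.succ 1) 0 0 0,
    _, single_sub_single_mem_lieSO (by simp [minkDiag]), 0, rfl⟩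

def translation (μ : Fin (n + 1)) : poincareLie n :=
  ⟨fromBlocks 0 (single μ () 1) 0 0, 0, zero_mem _, _, rfl⟩

theorem mk_fromBlocks_eq_sum {A : Matrix (Fin (n + 1)) (Fin (n + 1)) ℝ}
    (hA : A ∈ lieSO (diagonal (minkDiag n))) (b : Matrix (Fin (n + 1)) Unit ℝ) :
    (⟨fromBlocks A b 0 0, A, hA, b, rfl⟩ : poincareLie n) =
      ∑ i, A 0 i.succ • boost i + (2⁻¹ : ℝ) • ∑ i, ∑ j, A i.succ j.succ • rotation i j +
        ∑ μ, b μ () • translation μ := by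
  have h00 : A 0 0 = 0 := lieSO_diagonal_apply_self hA (by simp [minkDiag])
  have hi0 (i : Fin n) : A i.succ 0 = A 0 i.succ :=
    lieSO_diagonal_apply_swap_of_eq_neg hA (by simp [minkDiag]) (by simp [minkDiag])
  have hij (i j : Fin n) : A j.succ i.succ = -A i.succ j.succ :=
    lieSO_diagonal_apply_swap_of_eq hA (by simp [minkDiag]) (by simp [minkDiag])
  apply Subtype.ext
  push_cast
  ext (r | r) (c | c)
  · cases r using Fin.cases <;> cases c using Fin.cases <;>
      simp [boost, rotation, translation, Matrix.sum_apply, single_apply, h00, hi0,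
        (Fin.succ_ne_zero _).symm, mul_sub, Finset.sum_sub_distrib, ite_and]
    rw [hij]
    ring
  all_goals simp [boost, rotation, translation, Matrix.sum_apply, single_apply]

theorem submodule_eq_top_of_boost_rotation_translation_mem {S : Submodule ℝ (poincareLie n)}
    (hb : ∀ i, boost i ∈ S) (hr : ∀ i j, rotation i j ∈ S) (ht : ∀ μ, translation μ ∈ S) :
    S = ⊤ := by
  rw [eq_top_iff]
  rintro ⟨_, A, hA, b, rfl⟩ -
  rw [mk_fromBlocks_eq_sum hA b]
  exact add_mem (add_mem (sum_mem fun i _ => S.smul_mem _ (hb i))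
    (S.smul_mem _ (sum_mem fun i _ => sum_mem fun j _ => S.smul_mem _ (hr i j))))
    (sum_mem fun μ _ => S.smul_mem _ (ht μ))

theorem lie_boost_boost (i j : Fin n) : ⁅boost i, boost j⁆ = rotation i j := by
  apply Subtype.ext
  simp [boost, rotation, lie_fromBlocks_zero_zero,
    lie_single_add_single_single_add_single (Fin.succ_ne_zero i).symm (Fin.succ_ne_zero j).symm]

theorem lie_boost_rotation {i j : Fin n} (hij : i ≠ j) : ⁅boost i, rotation i j⁆ = boost j := by
  apply Subtype.ext
  simp [boost, rotation, lie_fromBlocks_zero_zero,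
    lie_single_add_single_single_sub_single (Fin.succ_ne_zero i).symm (Fin.succ_ne_zero j).symm
      (Fin.succ_injective _ |>.ne hij)]

theorem lie_boost_translation_zero (i : Fin n) :
    ⁅boost i, translation 0⁆ = translation i.succ := by
  apply Subtype.ext
  simp [boost, translation, lie_fromBlocks_zero_zero,
    single_add_single_mul_single_left (Fin.succ_ne_zero i).symm]

theorem lie_boost_translation_succ (i : Fin n) :
    ⁅boost i, translation i.succ⁆ = translation 0 := by
  apply Subtype.ext
  simp [boost, translation, lie_fromBlocks_zero_zero,
    single_add_single_mul_single_right (Fin.succ_ne_zero i).symm]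

theorem ad_boost_pow_three (i : Fin n) :
    LieAlgebra.ad ℝ (poincareLie n) (boost i) ^ 3 = LieAlgebra.ad ℝ (poincareLie n) (boost i) := by
  ext ⟨_, A, hA, b, rfl⟩ : 1
  apply Subtype.ext
  have hi : (0 : Fin (n + 1)) ≠ i.succ := (Fin.succ_ne_zero i).symm
  have h00 : A 0 0 = 0 := lieSO_diagonal_apply_self hA (by simp [minkDiag])
  have hii : A i.succ i.succ = 0 := lieSO_diagonal_apply_self hA (by simp [minkDiag])
  have hi0 : A i.succ 0 = A 0 i.succ :=
    lieSO_diagonal_apply_swap_of_eq_neg hA (by simp [minkDiag]) (by simp [minkDiag])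
  simp only [pow_succ, pow_zero, one_mul, Module.End.mul_apply, LieAlgebra.ad_apply,
    LieSubalgebra.coe_bracket, boost, lie_fromBlocks_zero_zero, Matrix.mul_zero, sub_zero,
    lie_lie_lie_single_add_single hi h00 hii hi0]
  rw [← Matrix.mul_assoc, ← Matrix.mul_assoc, ← pow_three', single_add_single_pow_three hi]

theorem essential_boost (i : Fin n) : Essential (boost i) := by
  refine ⟨Module.End.iSup_eigenspace_eq_top_of_pow_three_eq_self (ad_boost_pow_three i),
    submodule_eq_top_of_boost_rotation_translation_mem
      (fun j => ?_) (fun j k => ?_) (fun μ => ?_)⟩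
  · rcases eq_or_ne i j with rfl | hij
    · exact self_mem_essentialSpan _
    · rw [← lie_boost_rotation hij]
      exact lie_mem_essentialSpan _ _
  · by_cases hj : j = i
    · rw [hj, ← lie_boost_boost]
      exact lie_mem_essentialSpan _ _
    by_cases hk : k = i
    · rw [hk, ← lie_boost_boost, ← lie_skew, ← lie_neg]
      exact lie_mem_essentialSpan _ _
    rw [← lie_boost_boost, ← lie_boost_rotation (Ne.symm hj), ← lie_boost_rotation (Ne.symm hk)]
    exact lie_lie_mem_essentialSpan _ _ _
  · cases μ using Fin.cases with
    | zero =>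
      rw [← lie_boost_translation_succ i]
      exact lie_mem_essentialSpan _ _
    | succ j =>
      rcases eq_or_ne i j with rfl | hij
      · rw [← lie_boost_translation_zero]
        exact lie_mem_essentialSpan _ _
      rw [← lie_boost_translation_zero, ← lie_boost_rotation hij, ← lie_boost_translation_succ i]
      exact lie_lie_mem_essentialSpan _ _ _

end PoincareLie

/-- In the Poincaré algebra `iso(1,n)`, each embedded boost generator
`[[m_{0ν}, 0], [0, 0]]` with `m_{0ν} = E(0,ν) + E(ν,0)`, `1 ≤ ν ≤ n`, is essential. -/
theorem poincare_boost_essential (n : ℕ) (ν : Fin (n + 1)) (hν : ν ≠ 0) :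
    Essential
      (⟨fromBlocks
          (single (0 : Fin (n + 1)) ν (1 : ℝ) + single ν (0 : Fin (n + 1)) 1)
          0 0 0,
        ⟨single (0 : Fin (n + 1)) ν (1 : ℝ) + single ν (0 : Fin (n + 1)) 1,
          boost_mem_lieSO (minkDiag n) 0 ν (by simp [minkDiag]) (by simp [minkDiag, hν]),
          0, rfl⟩⟩ : poincareLie n) := by
  obtain ⟨i, rfl⟩ := Fin.exists_succ_eq.mpr hν
  exact PoincareLie.essential_boost i
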